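/- For positive integers L ≤ M ≤ N and any real M×N matrix W, the maximum of the linear function Y ↦ tr(WᵀY) over D is attained at some matrix Y* ∈ P. -/
import Mathlib


open Matrix BigOperators

/-- The set `P` of partial permutation matrices: real `M × N` matrices with entries in `{0,1}`,
row sums at most 1, column sums at most 1, and total sum equal to `L`. -/
def PPM (L M N : ℕ) : Set (Matrix (Fin M) (Fin N) ℝ) :=
  {X | (∀ i j, X i j = 0 ∨ X i j = 1) ∧ (∀ i, ∑ j, X i j ≤ 1) ∧
       (∀ j, ∑ i, X i j ≤ 1) ∧ (∑ i, ∑ j, X i j) = (L : ℝ)}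

/-- The set `D`: real `M × N` matrices with nonnegative entries, row sums at most 1,
column sums at most 1, and total sum equal to `L`. -/
def DSet (L M N : ℕ) : Set (Matrix (Fin M) (Fin N) ℝ) :=
  {X | (∀ i j, 0 ≤ X i j) ∧ (∀ i, ∑ j, X i j ≤ 1) ∧
       (∀ j, ∑ i, X i j ≤ 1) ∧ (∑ i, ∑ j, X i j) = (L : ℝ)}

/-- The `k × k` all-ones matrix `J_k`. -/
def Jmat (k : ℕ) : Matrix (Fin k) (Fin k) ℝ := Matrix.of fun _ _ => 1

noncomputable def padZ (L M N : ℕ) (Y : Matrix (Fin M) (Fin N) ℝ)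
    (e : (Fin N ⊕ Fin (M - L)) ≃ (Fin M ⊕ Fin (N - L))) :
    Matrix (Fin M ⊕ Fin (N - L)) (Fin M ⊕ Fin (N - L)) ℝ := fun r c =>
  Sum.elim
    (fun i => Sum.elim (fun j => Y i j)
      (fun _ => (1 - ∑ j, Y i j) / ((M - L : ℕ) : ℝ)) (e.symm c))
    (fun _ => Sum.elim (fun j => (1 - ∑ i, Y i j) / ((N - L : ℕ) : ℝ))
      (fun _ => 0) (e.symm c)) r

lemma aux_all_eq_one {ι : Type*} [Fintype ι] (f : ι → ℝ) (h1 : ∀ i, f i ≤ 1)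
    (h2 : ∑ i, f i = (Fintype.card ι : ℝ)) : ∀ i, f i = 1 := by
  intro i
  by_contra h
  have hi : f i < 1 := lt_of_le_of_ne (h1 i) h
  have : ∑ j, f j < ∑ _j : ι, (1:ℝ) :=
    Finset.sum_lt_sum (fun j _ => h1 j) ⟨i, Finset.mem_univ i, hi⟩
  simp [h2] at this

lemma padZ_mem (L M N : ℕ) (hL : 0 < L) (hLM : L ≤ M) (hMN : M ≤ N)
    (Y : Matrix (Fin M) (Fin N) ℝ) (hY : Y ∈ DSet L M N)
    (e : (Fin N ⊕ Fin (M - L)) ≃ (Fin M ⊕ Fin (N - L))) :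
    padZ L M N Y e ∈ doublyStochastic ℝ (Fin M ⊕ Fin (N - L)) := by
  obtain ⟨hpos, hrow, hcol, hsum⟩ := hY
  have hLN : L ≤ N := hLM.trans hMN
  have hsum' : ∑ j, ∑ i, Y i j = (L : ℝ) := by rw [Finset.sum_comm]; exact hsum
  have hrow1 : M = L → ∀ i, ∑ j, Y i j = 1 := by
    intro hML
    exact aux_all_eq_one _ hrow (by simp [hsum, hML])
  have hcol1 : N = L → ∀ j, ∑ i, Y i j = 1 := by
    intro hNL
    exact aux_all_eq_one _ hcol (by simp [hsum', hNL])
  rw [mem_doublyStochastic_iff_sum]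
  refine ⟨?_, ?_, ?_⟩
  · intro r c
    rcases r with i | k <;> rcases hc : e.symm c with j | k' <;>
      simp only [padZ, Sum.elim_inl, Sum.elim_inr, hc]
    · exact hpos i j
    · exact div_nonneg (by linarith [hrow i]) (Nat.cast_nonneg _)
    · exact div_nonneg (by linarith [hcol j]) (Nat.cast_nonneg _)
    · exact le_refl 0
  · intro r
    rw [← Equiv.sum_comp e (fun c => padZ L M N Y e r c), Fintype.sum_sum_type]
    rcases r with i | k
    · simp only [padZ, Sum.elim_inl, Sum.elim_inr, Equiv.symm_apply_apply,
        Finset.sum_const, Finset.card_univ, Fintype.card_fin, nsmul_eq_mul]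
      rcases eq_or_lt_of_le hLM with hEq | hlt
      · simp [← hEq, hrow1 hEq.symm i]
      · have hne : ((M - L : ℕ) : ℝ) ≠ 0 := by
          rw [Nat.cast_ne_zero]; omega
        rw [mul_comm, div_mul_cancel₀ _ hne]
        ring
    · have hNL : 0 < N - L := k.pos
      simp only [padZ, Sum.elim_inl, Sum.elim_inr, Equiv.symm_apply_apply,
        Finset.sum_const, Finset.card_univ, Fintype.card_fin, smul_zero, add_zero]
      rw [← Finset.sum_div]
      have h1 : ∑ j, (1 - ∑ i, Y i j) = (N : ℝ) - L := by
        rw [Finset.sum_sub_distrib, hsum']; simp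
      rw [h1, Nat.cast_sub hLN]
      apply div_self
      have : (L:ℝ) < N := by exact_mod_cast Nat.lt_of_sub_pos hNL
      linarith
  · intro c
    rw [Fintype.sum_sum_type]
    rcases hc : e.symm c with j | k
    · simp only [padZ, Sum.elim_inl, Sum.elim_inr, hc,
        Finset.sum_const, Finset.card_univ, Fintype.card_fin, nsmul_eq_mul]
      rcases eq_or_lt_of_le hLN with hEq | hlt
      · simp [← hEq, hcol1 hEq.symm j]
      · have hne : ((N - L : ℕ) : ℝ) ≠ 0 := by
          rw [Nat.cast_ne_zero]; omega
        rw [mul_comm, div_mul_cancel₀ _ hne]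
        ring
    · have hML : 0 < M - L := k.pos
      simp only [padZ, Sum.elim_inl, Sum.elim_inr, hc,
        Finset.sum_const, Finset.card_univ, Fintype.card_fin, smul_zero, add_zero]
      rw [← Finset.sum_div]
      have h1 : ∑ i, (1 - ∑ j, Y i j) = (M : ℝ) - L := by
        rw [Finset.sum_sub_distrib, hsum]; simp
      rw [h1, Nat.cast_sub hLM]
      apply div_self
      have : (L:ℝ) < M := by exact_mod_cast Nat.lt_of_sub_pos hML
      linarith

noncomputable def padW (L M N : ℕ) (W : Matrix (Fin M) (Fin N) ℝ) (C : ℝ)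
    (e : (Fin N ⊕ Fin (M - L)) ≃ (Fin M ⊕ Fin (N - L))) :
    Matrix (Fin M ⊕ Fin (N - L)) (Fin M ⊕ Fin (N - L)) ℝ := fun r c =>
  Sum.elim
    (fun i => Sum.elim (fun j => W i j) (fun _ => 0) (e.symm c))
    (fun _ => Sum.elim (fun _ => 0) (fun _ => -C) (e.symm c)) r

noncomputable def padG (L M N : ℕ) (W : Matrix (Fin M) (Fin N) ℝ) (C : ℝ)
    (e : (Fin N ⊕ Fin (M - L)) ≃ (Fin M ⊕ Fin (N - L)))
    (A : Matrix (Fin M ⊕ Fin (N - L)) (Fin M ⊕ Fin (N - L)) ℝ) : ℝ :=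
  ∑ r, ∑ c, padW L M N W C e r c * A r c

lemma perm_entry {n : Type*} [DecidableEq n] (σ : Equiv.Perm n) (r c : n) :
    (σ.permMatrix ℝ) r c = if σ r = c then 1 else 0 := by
  simp [Equiv.Perm.permMatrix, PEquiv.toMatrix_apply, Equiv.toPEquiv_apply]

lemma padG_padZ (L M N : ℕ) (W Y : Matrix (Fin M) (Fin N) ℝ) (C : ℝ)
    (e : (Fin N ⊕ Fin (M - L)) ≃ (Fin M ⊕ Fin (N - L))) :
    padG L M N W C e (padZ L M N Y e) = ∑ i, ∑ j, W i j * Y i j := by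
  unfold padG
  have hinner : ∀ r, ∑ c, padW L M N W C e r c * padZ L M N Y e r c
      = ∑ g, padW L M N W C e r (e g) * padZ L M N Y e r (e g) :=
    fun r => (Equiv.sum_comp e _).symm
  simp only [hinner]
  rw [Fintype.sum_sum_type]
  simp only [Fintype.sum_sum_type, padW, padZ, Equiv.symm_apply_apply,
    Sum.elim_inl, Sum.elim_inr, zero_mul, mul_zero, Finset.sum_const_zero,
    add_zero, zero_add, neg_mul]

lemma padG_decomp (L M N : ℕ) (W : Matrix (Fin M) (Fin N) ℝ) (C : ℝ)
    (e : (Fin N ⊕ Fin (M - L)) ≃ (Fin M ⊕ Fin (N - L)))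
    (w : Equiv.Perm (Fin M ⊕ Fin (N - L)) → ℝ)
    (A : Matrix (Fin M ⊕ Fin (N - L)) (Fin M ⊕ Fin (N - L)) ℝ)
    (hwA : ∑ σ, w σ • σ.permMatrix ℝ = A) :
    padG L M N W C e A = ∑ σ, w σ * padG L M N W C e (σ.permMatrix ℝ) := by
  subst hwA
  unfold padG
  calc ∑ r, ∑ c, padW L M N W C e r c * (∑ σ, w σ • σ.permMatrix ℝ) r c
      = ∑ r, ∑ c, ∑ σ, w σ * (padW L M N W C e r c * (σ.permMatrix ℝ) r c) := by
        refine Finset.sum_congr rfl fun r _ => Finset.sum_congr rfl fun c _ => ?_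
        rw [Matrix.sum_apply, Finset.mul_sum]
        exact Finset.sum_congr rfl fun σ _ => by simp [Matrix.smul_apply]; ring
    _ = ∑ r, ∑ σ, ∑ c, w σ * (padW L M N W C e r c * (σ.permMatrix ℝ) r c) :=
        Finset.sum_congr rfl fun r _ => Finset.sum_comm
    _ = ∑ σ, ∑ r, ∑ c, w σ * (padW L M N W C e r c * (σ.permMatrix ℝ) r c) :=
        Finset.sum_comm
    _ = ∑ σ, w σ * ∑ r, ∑ c, padW L M N W C e r c * (σ.permMatrix ℝ) r c := by
        refine Finset.sum_congr rfl fun σ _ => ?_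
        rw [Finset.mul_sum]
        exact Finset.sum_congr rfl fun r _ => by rw [Finset.mul_sum]

lemma padG_perm (L M N : ℕ) (W : Matrix (Fin M) (Fin N) ℝ) (C : ℝ)
    (e : (Fin N ⊕ Fin (M - L)) ≃ (Fin M ⊕ Fin (N - L)))
    (σ : Equiv.Perm (Fin M ⊕ Fin (N - L))) :
    padG L M N W C e (σ.permMatrix ℝ) = ∑ r, padW L M N W C e r (σ r) := by
  unfold padG
  refine Finset.sum_congr rfl fun r _ => ?_
  simp only [perm_entry, mul_ite, mul_one, mul_zero]
  rw [Finset.sum_ite_eq]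
  simp

lemma key_step (L M N : ℕ) (hL : 0 < L) (hLM : L ≤ M) (hMN : M ≤ N)
    (W Y : Matrix (Fin M) (Fin N) ℝ) (hY : Y ∈ DSet L M N) :
    ∃ X ∈ PPM L M N, ∑ i, ∑ j, W i j * Y i j ≤ ∑ i, ∑ j, W i j * X i j := by
  have hLN : L ≤ N := hLM.trans hMN
  have hcard : Fintype.card (Fin N ⊕ Fin (M - L)) = Fintype.card (Fin M ⊕ Fin (N - L)) := by
    simp only [Fintype.card_sum, Fintype.card_fin]; omega
  let e := Fintype.equivOfCardEq hcard
  obtain ⟨w, hw0, hw1, hwZ⟩ :=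
    exists_eq_sum_perm_of_mem_doublyStochastic (padZ_mem L M N hL hLM hMN Y hY e)
  obtain ⟨hpos, hrow, hcol, hsum⟩ := hY
  set S : ℝ := ∑ i, ∑ j, |W i j| with hSdef
  have hS0 : 0 ≤ S :=
    Finset.sum_nonneg fun i _ => Finset.sum_nonneg fun j _ => abs_nonneg _
  set C : ℝ := 2 * S + 1 with hCdef
  have hdec := padG_decomp L M N W C e w _ hwZ
  have hex : ∃ σ, w σ ≠ 0 ∧
      padG L M N W C e (padZ L M N Y e) ≤ padG L M N W C e (σ.permMatrix ℝ) := by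
    by_contra hcon
    push_neg at hcon
    have hne : ∃ σ0, w σ0 ≠ 0 := by
      by_contra h; push_neg at h
      rw [Finset.sum_eq_zero (fun σ _ => h σ)] at hw1
      exact one_ne_zero hw1.symm
    obtain ⟨σ0, hσ0⟩ := hne
    have hlt : ∑ σ, w σ * padG L M N W C e (σ.permMatrix ℝ)
        < ∑ σ, w σ * padG L M N W C e (padZ L M N Y e) := by
      refine Finset.sum_lt_sum (fun σ _ => ?_) ⟨σ0, Finset.mem_univ σ0, ?_⟩
      · rcases eq_or_ne (w σ) 0 with h | h
        · simp [h]
        · exact mul_le_mul_of_nonneg_left (hcon σ h).le (hw0 σ)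
      · exact mul_lt_mul_of_pos_left (hcon σ0 hσ0) (lt_of_le_of_ne (hw0 σ0) (Ne.symm hσ0))
    rw [← hdec, ← Finset.sum_mul, hw1, one_mul] at hlt
    exact lt_irrefl _ hlt
  obtain ⟨σ, hwσ, hgle⟩ := hex
  rw [padG_padZ] at hgle
  have hYle1 : ∀ i j, Y i j ≤ 1 := fun i j =>
    le_trans (Finset.single_le_sum (fun i' _ => hpos i' j) (Finset.mem_univ i)) (hcol j)
  have hfY_lb : -S ≤ ∑ i, ∑ j, W i j * Y i j := by
    have hterm : ∀ i j, -|W i j| ≤ W i j * Y i j := by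
      intro i j
      rcases abs_cases (W i j) with ⟨h1, h2⟩ | ⟨h1, h2⟩
      · nlinarith [hpos i j, hYle1 i j]
      · nlinarith [hpos i j, hYle1 i j]
    calc -S = ∑ i, ∑ j, -|W i j| := by simp [hSdef]
      _ ≤ _ := Finset.sum_le_sum fun i _ => Finset.sum_le_sum fun j _ => hterm i j
  have hBR : ∀ k : Fin (N - L), ∃ j, e.symm (σ (Sum.inr k)) = Sum.inl j := by
    intro k
    rcases hk : e.symm (σ (Sum.inr k)) with j | k'
    · exact ⟨j, rfl⟩
    exfalso
    have h1 : ∑ i, padW L M N W C e (Sum.inl i) (σ (Sum.inl i)) ≤ S := by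
      rw [hSdef]
      refine Finset.sum_le_sum fun i _ => ?_
      rcases hi : e.symm (σ (Sum.inl i)) with j0 | k0
      · simp only [padW, Sum.elim_inl, hi]
        exact le_trans (le_abs_self _)
          (Finset.single_le_sum (f := fun j => |W i j|) (fun j _ => abs_nonneg _)
            (Finset.mem_univ j0))
      · simp only [padW, Sum.elim_inl, Sum.elim_inr, hi]
        exact Finset.sum_nonneg fun j _ => abs_nonneg _
    have h2 : ∑ k'' : Fin (N - L), padW L M N W C e (Sum.inr k'') (σ (Sum.inr k'')) ≤ -C := by
      have hterm : ∀ k'' : Fin (N - L), padW L M N W C e (Sum.inr k'') (σ (Sum.inr k''))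
          ≤ (if k'' = k then -C else 0) := by
        intro k''
        by_cases h : k'' = k
        · subst h; simp [padW, hk]
        · rcases h' : e.symm (σ (Sum.inr k'')) with j0 | k0 <;>
            simp only [padW, Sum.elim_inl, Sum.elim_inr, h', if_neg h]
          · exact le_refl 0
          · linarith
      calc ∑ k'' : Fin (N - L), padW L M N W C e (Sum.inr k'') (σ (Sum.inr k''))
          ≤ ∑ k'' : Fin (N - L), (if k'' = k then -C else 0) :=
            Finset.sum_le_sum fun k'' _ => hterm k''
        _ = -C := by rw [Finset.sum_ite_eq' Finset.univ]; simp
    have h3 : padG L M N W C e (σ.permMatrix ℝ) ≤ S - C := by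
      rw [padG_perm, Fintype.sum_sum_type]; linarith
    rw [hCdef] at h3
    linarith
  set X : Matrix (Fin M) (Fin N) ℝ :=
    fun i j => if σ (Sum.inl i) = e (Sum.inl j) then 1 else 0 with hXdef
  have hcond : ∀ i j, (σ (Sum.inl i) = e (Sum.inl j)) ↔ (e.symm (σ (Sum.inl i)) = Sum.inl j) := by
    intro i j; rw [Equiv.symm_apply_eq]
  have hcond2 : ∀ i j, (σ (Sum.inl i) = e (Sum.inl j)) ↔ (Sum.inl i = σ.symm (e (Sum.inl j))) :=
    fun i j => Equiv.apply_eq_iff_eq_symm_apply σ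
  have h01 : ∀ i j, X i j = 0 ∨ X i j = 1 := by
    intro i j; rw [hXdef]; dsimp only; split <;> simp
  have hXrowle : ∀ i, ∑ j, X i j ≤ 1 := by
    intro i
    rcases hi : e.symm (σ (Sum.inl i)) with j0 | k0
    · have hx : ∀ j, X i j = if j0 = j then (1:ℝ) else 0 := by
        intro j; simp only [hXdef, hcond, hi, Sum.inl.injEq]
      simp only [hx]
      rw [Finset.sum_ite_eq]
      simp
    · have hx : ∀ j, X i j = 0 := by
        intro j; simp only [hXdef, hcond, hi]; simp
      simp [hx]
  have hXcolle : ∀ j, ∑ i, X i j ≤ 1 := by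
    intro j
    rcases hj : σ.symm (e (Sum.inl j)) with i0 | k0
    · have hx : ∀ i, X i j = if i = i0 then (1:ℝ) else 0 := by
        intro i; simp only [hXdef, hcond2, hj, Sum.inl.injEq]
      simp only [hx]
      rw [Finset.sum_ite_eq']
      simp
    · have hx : ∀ i, X i j = 0 := by
        intro i; simp only [hXdef, hcond2, hj]; simp
      simp [hx]
  have hcolperm : ∀ c, ∑ r : Fin M ⊕ Fin (N - L), (if σ r = c then (1:ℝ) else 0) = 1 := by
    intro c
    have hc : ∀ r, (σ r = c) ↔ (r = σ.symm c) := fun r => Equiv.apply_eq_iff_eq_symm_apply σ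
    simp only [hc]
    rw [Finset.sum_ite_eq']
    simp
  have hB : ∀ k : Fin (N - L), ∑ j, (if σ (Sum.inr k) = e (Sum.inl j) then (1:ℝ) else 0) = 1 := by
    intro k
    obtain ⟨jk, hjk⟩ := hBR k
    have hc : ∀ j, (σ (Sum.inr k) = e (Sum.inl j)) ↔ (jk = j) := by
      intro j
      rw [← Equiv.symm_apply_eq, hjk, Sum.inl.injEq]
    simp only [hc]
    rw [Finset.sum_ite_eq]
    simp
  have hTL : ∑ j, ∑ i, X i j = (L:ℝ) := by
    have hT : ∑ j, ∑ r : Fin M ⊕ Fin (N - L), (if σ r = e (Sum.inl j) then (1:ℝ) else 0)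
        = (N : ℝ) := by simp [hcolperm]
    have hsplit : ∀ j, ∑ r : Fin M ⊕ Fin (N - L), (if σ r = e (Sum.inl j) then (1:ℝ) else 0)
        = (∑ i, X i j) + ∑ k : Fin (N - L), (if σ (Sum.inr k) = e (Sum.inl j) then (1:ℝ) else 0) := by
      intro j
      rw [Fintype.sum_sum_type]
    rw [Finset.sum_congr rfl (fun j _ => hsplit j), Finset.sum_add_distrib] at hT
    have hB2 : ∑ j, ∑ k : Fin (N - L), (if σ (Sum.inr k) = e (Sum.inl j) then (1:ℝ) else 0)
        = ((N - L : ℕ) : ℝ) := by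
      rw [Finset.sum_comm]
      simp [hB]
    rw [hB2] at hT
    have hcast : ((N - L : ℕ) : ℝ) = (N : ℝ) - L := by rw [Nat.cast_sub hLN]
    linarith
  have hXsum : ∑ i, ∑ j, X i j = (L:ℝ) := by rw [Finset.sum_comm]; exact hTL
  have hval : ∑ i, ∑ j, W i j * X i j = padG L M N W C e (σ.permMatrix ℝ) := by
    rw [padG_perm, Fintype.sum_sum_type]
    have h2 : ∀ k : Fin (N - L), padW L M N W C e (Sum.inr k) (σ (Sum.inr k)) = 0 := by
      intro k; obtain ⟨jk, hjk⟩ := hBR k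
      simp [padW, hjk]
    have h1 : ∀ i, ∑ j, W i j * X i j = padW L M N W C e (Sum.inl i) (σ (Sum.inl i)) := by
      intro i
      rcases hi : e.symm (σ (Sum.inl i)) with j0 | k0
      · have hx : ∀ j, X i j = if j0 = j then (1:ℝ) else 0 := by
          intro j; simp only [hXdef, hcond, hi, Sum.inl.injEq]
        simp only [hx, mul_ite, mul_one, mul_zero]
        rw [Finset.sum_ite_eq]
        simp [padW, hi]
      · have hx : ∀ j, X i j = 0 := by
          intro j; simp only [hXdef, hcond, hi]; simp
        simp [hx, padW, hi]
    simp only [h1, h2, Finset.sum_const_zero, add_zero]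
  exact ⟨X, ⟨h01, hXrowle, hXcolle, hXsum⟩, by rw [hval]; exact hgle⟩

lemma aux_count (L M : ℕ) (hLM : L ≤ M) :
    ∑ i : Fin M, (if (i : ℕ) < L then (1:ℝ) else 0) = (L : ℝ) := by
  rw [Fin.sum_univ_eq_sum_range (fun i => if i < L then (1:ℝ) else 0)]
  have h : (Finset.range M).filter (· < L) = Finset.range L := by
    ext x; simp [Finset.mem_filter, Finset.mem_range]; omega
  rw [Finset.sum_ite, h]
  simp

lemma ppm_finite (L M N : ℕ) : (PPM L M N).Finite := by
  apply Set.Finite.subset (Set.finite_range fun b : Matrix (Fin M) (Fin N) Bool =>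
    (Matrix.of fun i j => if b i j then (1:ℝ) else 0))
  rintro X ⟨h01, -, -, -⟩
  refine ⟨Matrix.of fun i j => decide (X i j = 1), ?_⟩
  ext i j
  rcases h01 i j with h | h <;> simp [h]

lemma ppm_nonempty (L M N : ℕ) (hL : 0 < L) (hLM : L ≤ M) (hMN : M ≤ N) :
    (PPM L M N).Nonempty := by
  refine ⟨Matrix.of fun i j => if ((j:ℕ) = (i:ℕ) ∧ (i:ℕ) < L) then (1:ℝ) else 0, ?_, ?_, ?_, ?_⟩
  · intro i j; dsimp only [Matrix.of_apply]; split <;> simp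
  · intro i
    by_cases hi : (i:ℕ) < L
    · have : ∀ j : Fin N, (if ((j:ℕ) = (i:ℕ) ∧ (i:ℕ) < L) then (1:ℝ) else 0)
          = if j = (⟨(i:ℕ), lt_of_lt_of_le i.isLt hMN⟩ : Fin N) then (1:ℝ) else 0 := by
        intro j; simp [Fin.ext_iff, hi]
      simp only [Matrix.of_apply, this]
      rw [Finset.sum_ite_eq' Finset.univ]
      simp
    · have : ∀ j : Fin N, (if ((j:ℕ) = (i:ℕ) ∧ (i:ℕ) < L) then (1:ℝ) else 0) = 0 := by
        intro j; simp [hi]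
      simp [this]
  · intro j
    by_cases hj : (j:ℕ) < L
    · have hjM : (j:ℕ) < M := lt_of_lt_of_le hj hLM
      have : ∀ i : Fin M, (if ((j:ℕ) = (i:ℕ) ∧ (i:ℕ) < L) then (1:ℝ) else 0)
          = if i = (⟨(j:ℕ), hjM⟩ : Fin M) then (1:ℝ) else 0 := by
        intro i
        by_cases h : i = (⟨(j:ℕ), hjM⟩ : Fin M)
        · subst h; simp [hj]
        · have : ¬ ((j:ℕ) = (i:ℕ)) := by
            intro hc; exact h (Fin.ext hc.symm)
          simp [h, this]
      simp only [Matrix.of_apply, this]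
      rw [Finset.sum_ite_eq' Finset.univ]
      simp
    · have : ∀ i : Fin M, (if ((j:ℕ) = (i:ℕ) ∧ (i:ℕ) < L) then (1:ℝ) else 0) = 0 := by
        intro i
        rw [if_neg]
        rintro ⟨h1, h2⟩
        omega
      simp [this]
  · have hrow : ∀ i : Fin M, ∑ j : Fin N,
        (if ((j:ℕ) = (i:ℕ) ∧ (i:ℕ) < L) then (1:ℝ) else 0)
        = if (i:ℕ) < L then (1:ℝ) else 0 := by
      intro i
      by_cases hi : (i:ℕ) < L
      · have : ∀ j : Fin N, (if ((j:ℕ) = (i:ℕ) ∧ (i:ℕ) < L) then (1:ℝ) else 0)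
            = if j = (⟨(i:ℕ), lt_of_lt_of_le i.isLt hMN⟩ : Fin N) then (1:ℝ) else 0 := by
          intro j; simp [Fin.ext_iff, hi]
        simp only [this]
        rw [Finset.sum_ite_eq' Finset.univ]
        simp [hi]
      · simp [hi]
    simp only [Matrix.of_apply, hrow]
    exact aux_count L M hLM

lemma trace_eq_double_sum (M N : ℕ) (W Y : Matrix (Fin M) (Fin N) ℝ) :
    trace (Wᵀ * Y) = ∑ i, ∑ j, W i j * Y i j := by
  rw [Matrix.trace]
  simp only [Matrix.diag_apply, Matrix.mul_apply, Matrix.transpose_apply]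
  rw [Finset.sum_comm]

/-- The linear function  `Y ↦ tr(Wᵀ Y)` attains its maximum over `D` at some `Y* ∈ P`. -/
theorem linear_max_attained_on_PPM (L M N : ℕ)
    (hL : 0 < L) (hLM : L ≤ M) (hMN : M ≤ N)
    (W : Matrix (Fin M) (Fin N) ℝ) :
    ∃ Ystar ∈ PPM L M N, ∀ Y ∈ DSet L M N, trace (Wᵀ * Y) ≤ trace (Wᵀ * Ystar) := by
  obtain ⟨Ystar, hYs, hmax⟩ := Set.exists_max_image (PPM L M N)
    (fun X => ∑ i, ∑ j, W i j * X i j) (ppm_finite L M N) (ppm_nonempty L M N hL hLM hMN)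
  refine ⟨Ystar, hYs, fun Y hY => ?_⟩
  rw [trace_eq_double_sum, trace_eq_double_sum]
  obtain ⟨X, hX, hle⟩ := key_step L M N hL hLM hMN W Y hY
  exact hle.trans (hmax X hX)
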